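/- arXiv:1805.00244 — 7 statements merged into one kernel-verified Lean document; each statement's English description precedes it below -/
import Mathlib

section
/- Let V be a real inner product space, B a finite linearly independent set of nonzero vectors of V, and w ∈ V. Then the set of functions n : B → ℕ such that ⟪β, w − Σ_{α∈B} n(α)·α^∨⟫ ≥ 0 for all β ∈ B is finite. (This is the combinatorial content of the finiteness assertion of the paper's Lemma 'Z_z^+(V,V') is finite': for z ∈ Z the set Z⁺ ∩ z·∏_{α∈Δ} a_α^ℕ is finite.) -/
/-!
Put `v = ∑ n(α) α^∨`. Dominance of `w - v` makes `⟪v, w - v⟫` a nonnegative combination of the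
`⟪β, w - v⟫`, so `‖v‖² ≤ ⟪v, w⟫ ≤ ‖v‖ ‖w‖` and `‖v‖ ≤ ‖w‖`. The coroots are linearly independent,
so the coefficient vector depends on `v` in an antilipschitz way and stays bounded: only finitely
many `n : B → ℕ` qualify.
-/

open scoped RealInnerProductSpace

section InnerProductSpace

variable {V : Type*} [NormedAddCommGroup V] [InnerProductSpace ℝ V]

noncomputable def coroot (α : V) : V := (2 / ⟪α, α⟫) • α

theorem inner_coroot_left (α x : V) : ⟪coroot α, x⟫ = 2 / ⟪α, α⟫ * ⟪α, x⟫ :=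
  real_inner_smul_left _ _ _

theorem inner_coroot_nonneg {α x : V} (h : 0 ≤ ⟪α, x⟫) : 0 ≤ ⟪coroot α, x⟫ := by
  rw [inner_coroot_left]
  exact mul_nonneg (div_nonneg zero_le_two real_inner_self_nonneg) h

theorem LinearIndependent.coroot {ι : Type*} {v : ι → V} (hv : LinearIndependent ℝ v) :
    LinearIndependent ℝ fun i => coroot (v i) :=
  hv.units_smul fun i =>
    Units.mk0 _ (div_ne_zero two_ne_zero (inner_self_ne_zero.2 (hv.ne_zero i)))

theorem norm_le_of_inner_sub_nonneg {v w : V} (h : 0 ≤ ⟪v, w - v⟫) : ‖v‖ ≤ ‖w‖ := by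
  rw [inner_sub_right, real_inner_self_eq_norm_mul_norm] at h
  nlinarith [real_inner_le_norm v w, norm_nonneg v, norm_nonneg w]

theorem norm_sum_smul_le_of_inner_sub_nonneg {ι : Type*} (s : Finset ι) {a : ι → ℝ}
    {u : ι → V} {w : V} (ha : ∀ i ∈ s, 0 ≤ a i)
    (hw : ∀ i ∈ s, 0 ≤ ⟪u i, w - ∑ j ∈ s, a j • u j⟫) :
    ‖∑ i ∈ s, a i • u i‖ ≤ ‖w‖ := by
  refine norm_le_of_inner_sub_nonneg ?_
  rw [sum_inner]
  exact Finset.sum_nonneg fun i hi => by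
    rw [real_inner_smul_left]
    exact mul_nonneg (ha i hi) (hw i hi)

end InnerProductSpace

theorem LinearIndependent.finite_setOf_norm_sum_natCast_smul_le {ι E : Type*} [Fintype ι]
    [NormedAddCommGroup E] [NormedSpace ℝ E] {c : ι → E} (hc : LinearIndependent ℝ c) (R : ℝ) :
    {n : ι → ℕ | ‖∑ i, (n i : ℝ) • c i‖ ≤ R}.Finite := by
  classical
  obtain ⟨K, -, hK⟩ := (Fintype.linearCombination ℝ c).exists_antilipschitzWith
    (LinearMap.ker_eq_bot.2 hc.fintypeLinearCombination_injective)
  obtain ⟨C, hC⟩ :=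
    (hK.isBounded_preimage (Metric.isBounded_closedBall (x := 0) (r := R))).exists_norm_le
  refine (Set.finite_Iic fun _ => ⌈C⌉₊).subset fun n hn i => ?_
  have hcoeff : ‖fun i => (n i : ℝ)‖ ≤ C :=
    hC _ (by simpa [Fintype.linearCombination_apply] using hn)
  have hni : (n i : ℝ) ≤ C := by simpa using (norm_le_pi_norm _ i).trans hcoeff
  exact_mod_cast hni.trans (Nat.le_ceil C)

theorem finite_dominant_shifts_general
    {V : Type*} [NormedAddCommGroup V] [InnerProductSpace ℝ V]
    (B : Finset V)
    (hB : LinearIndependent ℝ (Subtype.val : ↥(B : Set V) → V))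
    (w : V) :
    {n : B → ℕ | ∀ β ∈ B,
      0 ≤ ⟪β, (w - ∑ α ∈ B.attach, (n α : ℝ) •
        ((2 / ⟪(α : V), (α : V)⟫) • (α : V)))⟫}.Finite := by
  refine (hB.coroot.finite_setOf_norm_sum_natCast_smul_le ‖w‖).subset fun n hn => ?_
  exact norm_sum_smul_le_of_inner_sub_nonneg _ (fun α _ => Nat.cast_nonneg _)
    fun α _ => inner_coroot_nonneg (hn α α.2)

/-- Combinatorial content of the finiteness of `Z_z^+(V,V')`: for a finite linearly
independent set `B` of nonzero vectors and `w ∈ V`, the set of `n : B → ℕ` such that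
`w - ∑ n(α) • α^∨` is `B`-dominant is finite. -/
theorem finite_dominant_shifts
    {V : Type*} [NormedAddCommGroup V] [InnerProductSpace ℝ V]
    (B : Finset V)
    (hB : LinearIndependent ℝ (Subtype.val : ↥(B : Set V) → V))
    (h0 : ∀ α ∈ B, α ≠ (0 : V)) (w : V) :
    {n : B → ℕ | ∀ β ∈ B,
      0 ≤ ⟪β, (w - ∑ α ∈ B.attach, (n α : ℝ) •
        ((2 / ⟪(α : V), (α : V)⟫) • (α : V)))⟫}.Finite :=
  finite_dominant_shifts_general B hB w
end

section
/- Let V be a real inner product space and B a finite obtuse set of nonzero vectors of V. Let w ∈ V and n : B → ℕ be such that ⟪β, w⟫ ≥ 2·n(β) for every β ∈ B. Then the vector w − Σ_{α∈B} n(α)·α^∨ is B-dominant. (Combinatorial form of the paper's Lemma 3.4 ('Lemma plus'): if z ∈ Z⁺ and ⟨α, v(z)⟩ is large enough for those α ∈ Δ with n(α) > 0, then z·∏_{α∈Δ} a_α^{n(α)} lies in Z⁺.) -/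
open scoped RealInnerProductSpace

/-- Combinatorial form of the paper's Lemma 3.4 ("Lemma plus"): if `B` is a finite obtuse set
of nonzero vectors, `w ∈ V`, and `n : B → ℕ` satisfies `⟪β, w⟫ ≥ 2·n(β)` for every `β ∈ B`,
then `w - ∑ n(α) • α^∨` is `B`-dominant. -/
theorem dominant_of_large_pairing
    {V : Type*} [NormedAddCommGroup V] [InnerProductSpace ℝ V]
    (B : Finset V) (h0 : ∀ α ∈ B, α ≠ (0 : V))
    (hobt : ∀ α ∈ B, ∀ β ∈ B, α ≠ β → ⟪α, β⟫ ≤ 0)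
    (w : V) (n : B → ℕ)
    (h : ∀ β : B, 2 * (n β : ℝ) ≤ ⟪(β : V), w⟫) :
    ∀ β ∈ B,
      0 ≤ ⟪β, (w - ∑ α ∈ B.attach, (n α : ℝ) •
        ((2 / ⟪(α : V), (α : V)⟫) • (α : V)))⟫ := by
  classical
  intro β hβ
  rw [inner_sub_right, inner_sum]
  simp only [real_inner_smul_right]
  set b : B := ⟨β, hβ⟩
  have hmem : b ∈ B.attach := Finset.mem_attach _ _
  rw [← Finset.add_sum_erase _ _ hmem]
  have hββ : ⟪β, β⟫ ≠ 0 := fun hc =>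
    h0 β hβ (inner_self_eq_zero.mp hc)
  have hterm : (n b : ℝ) * (2 / ⟪β, β⟫ * ⟪β, β⟫) = 2 * (n b : ℝ) := by
    rw [div_mul_cancel₀ _ hββ]; ring
  have hrest : (∑ α ∈ (B.attach).erase b, (n α : ℝ) * (2 / ⟪(α : V), (α : V)⟫ * ⟪β, (α : V)⟫)) ≤ 0 := by
    apply Finset.sum_nonpos
    intro α hα
    have hne : (α : V) ≠ β := by
      intro hc
      exact (Finset.mem_erase.mp hα).1 (Subtype.ext hc)
    have h1 : ⟪β, (α : V)⟫ ≤ 0 := hobt β hβ (α : V) α.2 (Ne.symm hne)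
    have h2 : (0 : ℝ) ≤ 2 / ⟪(α : V), (α : V)⟫ := by
      apply div_nonneg (by norm_num)
      exact real_inner_self_nonneg
    have := mul_nonpos_of_nonneg_of_nonpos h2 h1
    exact mul_nonpos_of_nonneg_of_nonpos (Nat.cast_nonneg _) this
  have hw := h b
  show 0 ≤ ⟪β, w⟫ - _
  calc (0:ℝ) ≤ ⟪β, w⟫ - 2 * (n b : ℝ) - (∑ α ∈ (B.attach).erase b,
        (n α : ℝ) * (2 / ⟪(α : V), (α : V)⟫ * ⟪β, (α : V)⟫)) := by
        have : 2 * (n b : ℝ) ≤ ⟪β, w⟫ := hw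
        linarith
    _ = ⟪β, w⟫ - ((n b : ℝ) * (2 / ⟪β, β⟫ * ⟪β, β⟫) + ∑ α ∈ (B.attach).erase b,
        (n α : ℝ) * (2 / ⟪(α : V), (α : V)⟫ * ⟪β, (α : V)⟫)) := by
        rw [hterm]; ring
end

section
/- Let V be a real inner product space, B a finite linearly independent set of nonzero vectors of V, α ∈ B, and w ∈ V with ⟪α, w⟫ > 0 and ⟪β, w⟫ = 0 for all β ∈ B∖{α}. Let n : B → ℕ be such that 2w − Σ_{β∈B} n(β)·β^∨ is B-dominant. Then either n(β) = 0 for all β ∈ B, or n(α) ≥ 1. (Combinatorial form of part (ii) of the paper's lemma on the singular case: an element z₁ ∈ Z⁺ ∩ z²·∏_{β∈Δ} a_β^ℕ equals z² or lies in Z⁺ ∩ z²a_α·∏_{β∈Δ} a_β^ℕ.) -/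
open scoped RealInnerProductSpace

/-- Combinatorial form of part (ii) of the paper's lemma on the singular case:
if `B` is finite linearly independent, `α ∈ B`, `⟪α, w⟫ > 0`, `⟪β, w⟫ = 0` for `β ∈ B \ {α}`,
and `n : B → ℕ` is such that `2w - ∑ n(β) • β^∨` is `B`-dominant, then either `n = 0`
or `n(α) ≥ 1`. -/
theorem singular_dominant_dichotomy
    {V : Type*} [NormedAddCommGroup V] [InnerProductSpace ℝ V]
    (B : Finset V) (h0 : ∀ α ∈ B, α ≠ (0 : V))
    (hB : LinearIndependent ℝ (Subtype.val : ↥(B : Set V) → V))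
    (α : V) (hα : α ∈ B) (w : V)
    (h1 : 0 < ⟪α, w⟫) (h2 : ∀ β ∈ B, β ≠ α → ⟪β, w⟫ = 0)
    (n : B → ℕ)
    (hdom : ∀ β ∈ B,
      0 ≤ ⟪β, ((2 : ℝ) • w - ∑ γ ∈ B.attach, (n γ : ℝ) •
        ((2 / ⟪(γ : V), (γ : V)⟫) • (γ : V)))⟫) :
    (∀ β : B, n β = 0) ∨ 1 ≤ n ⟨α, hα⟩ := by
  by_cases hna : 1 ≤ n ⟨α, hα⟩
  · exact Or.inr hna
  left
  have hna0 : n ⟨α, hα⟩ = 0 := Nat.lt_one_iff.mp (Nat.lt_of_not_le hna)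
  set v : V := ∑ γ ∈ B.attach, (n γ : ℝ) • ((2 / ⟪(γ : V), (γ : V)⟫) • (γ : V)) with hv
  -- positivity of self inner products
  have hpos : ∀ γ : B, 0 < ⟪(γ : V), (γ : V)⟫ := by
    intro γ
    have hne := h0 γ γ.2
    rw [real_inner_self_eq_norm_sq]
    exact pow_pos (norm_pos_iff.mpr hne) 2
  -- for β ≠ α, ⟪β, v⟫ ≤ 0
  have hneg : ∀ β : B, (β : V) ≠ α → ⟪(β : V), v⟫ ≤ 0 := by
    intro β hβne
    have hd := hdom β β.2
    rw [inner_sub_right, inner_smul_right, h2 β β.2 hβne] at hd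
    linarith
  -- ⟪v, v⟫ ≤ 0
  have hvv : ⟪v, v⟫ ≤ 0 := by
    rw [hv, sum_inner]
    apply Finset.sum_nonpos
    intro γ _
    rw [real_inner_smul_left, real_inner_smul_left]
    by_cases hγ : (γ : V) = α
    · have : γ = ⟨α, hα⟩ := Subtype.ext hγ
      rw [this, hna0]
      simp
    · have h1 : (0:ℝ) ≤ (n γ : ℝ) := Nat.cast_nonneg _
      have h2' : (0:ℝ) ≤ 2 / ⟪(γ : V), (γ : V)⟫ :=
        div_nonneg (by norm_num) (le_of_lt (hpos γ))
      have := hneg γ hγ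
      have := mul_nonpos_of_nonneg_of_nonpos h2' this
      nlinarith
  have hv0 : v = 0 := by
    have := real_inner_self_nonneg (x := v)
    exact inner_self_eq_zero.mp (le_antisymm hvv this)
  -- rewrite v as a linear combination with scalar coefficients
  have hv0' : ∑ γ ∈ B.attach, ((n γ : ℝ) * (2 / ⟪(γ : V), (γ : V)⟫)) • (γ : V) = 0 := by
    rw [← hv0, hv]
    apply Finset.sum_congr rfl
    intro γ _
    rw [mul_smul]
  intro β
  have hzero := linearIndependent_iff'.mp hB B.attach
    (fun γ => (n γ : ℝ) * (2 / ⟪(γ : V), (γ : V)⟫)) hv0' β (Finset.mem_attach _ _)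
  have h2pos : 0 < 2 / ⟪(β : V), (β : V)⟫ := by
    exact div_pos (by norm_num) (hpos β)
  have : (n β : ℝ) = 0 := by
    rcases mul_eq_zero.mp hzero with h | h
    · exact h
    · exact absurd h (ne_of_gt h2pos)
  exact_mod_cast this
end

section
/- Let V be a real inner product space, B a finite set of nonzero vectors of V, J ⊆ B a linearly independent subset, and w ∈ V a B-dominant vector with ⟪β, w⟫ = 0 for all β ∈ J. If n : J → ℕ is such that w − Σ_{β∈J} n(β)·β^∨ is B-dominant, then n(β) = 0 for all β ∈ J. (This is the uniqueness assertion in part C of the proof of the reduction of the inverse Satake theorem: z'² is the only element of z'²·∏_{β∈Δ'(V')∩Δ'(V)} a_β^ℕ lying in Z⁺.) -/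
open scoped RealInnerProductSpace

/-- Uniqueness assertion in part C of the reduction of the inverse Satake theorem:
if `B` is a finite set of nonzero vectors, `J ⊆ B` is linearly independent, `w` is
`B`-dominant with `⟪β, w⟫ = 0` for all `β ∈ J`, and `n : J → ℕ` is such that
`w - ∑_{β ∈ J} n(β) • β^∨` is still `B`-dominant, then `n = 0`. -/
theorem dominant_shift_unique
    {V : Type*} [NormedAddCommGroup V] [InnerProductSpace ℝ V]
    (B : Finset V) (h0 : ∀ α ∈ B, α ≠ (0 : V))
    (J : Finset V) (hJB : J ⊆ B)
    (hJ : LinearIndependent ℝ (Subtype.val : ↥(J : Set V) → V))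
    (w : V) (hw : ∀ β ∈ B, 0 ≤ ⟪β, w⟫) (hw0 : ∀ β ∈ J, ⟪β, w⟫ = 0)
    (n : J → ℕ)
    (hdom : ∀ β ∈ B,
      0 ≤ ⟪β, (w - ∑ γ ∈ J.attach, (n γ : ℝ) •
        ((2 / ⟪(γ : V), (γ : V)⟫) • (γ : V)))⟫) :
    ∀ β : J, n β = 0 := by
  set v : V := ∑ γ ∈ J.attach, (n γ : ℝ) •
      ((2 / ⟪(γ : V), (γ : V)⟫) • (γ : V)) with hv
  have hle : ∀ β : J, ⟪(β : V), v⟫ ≤ 0 := by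
    intro β
    have h1 := hdom β (hJB β.2)
    rw [inner_sub_right, hw0 β β.2] at h1
    linarith
  have hsum : ⟪v, v⟫ = ∑ γ ∈ J.attach,
      ((n γ : ℝ) * (2 / ⟪(γ : V), (γ : V)⟫)) * ⟪(γ : V), v⟫ := by
    conv_lhs => rw [hv]
    rw [sum_inner]
    refine Finset.sum_congr rfl fun γ _ => ?_
    rw [real_inner_smul_left, real_inner_smul_left]; ring
  have hvv : ⟪v, v⟫ ≤ 0 := by
    rw [hsum]
    refine Finset.sum_nonpos fun γ _ => ?_
    refine mul_nonpos_of_nonneg_of_nonpos ?_ (hle γ)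
    have := real_inner_self_nonneg (x := (γ : V))
    positivity
  have hv0 : v = 0 := by
    have h2 : ⟪v, v⟫ = 0 := le_antisymm hvv real_inner_self_nonneg
    exact inner_self_eq_zero.mp h2
  have hveq : v = ∑ γ : ↥(J : Set V),
      ((n ⟨(γ : V), γ.2⟩ : ℝ) * (2 / ⟪(γ : V), (γ : V)⟫)) • (γ : V) := by
    rw [hv, ← Finset.univ_eq_attach]
    refine Fintype.sum_equiv
      (Equiv.subtypeEquivRight fun x => (Finset.mem_coe (s := J) (a := x)).symm)
      _ _ fun x => ?_
    rw [smul_smul]; rfl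
  have hz := Fintype.linearIndependent_iff.mp hJ
    (fun γ : ↥(J : Set V) => (n ⟨(γ : V), γ.2⟩ : ℝ) * (2 / ⟪(γ : V), (γ : V)⟫))
    (by rw [← hveq, hv0])
  intro β
  have hβ0 : (β : V) ≠ 0 := h0 β (hJB β.2)
  have hip : ⟪(β : V), (β : V)⟫ ≠ 0 := fun h => hβ0 (inner_self_eq_zero.mp h)
  have h3 := hz ⟨(β : V), β.2⟩
  have h4 : (n β : ℝ) * (2 / ⟪(β : V), (β : V)⟫) = 0 := h3
  rcases mul_eq_zero.mp h4 with h | h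
  · exact_mod_cast h
  · exact absurd h (div_ne_zero two_ne_zero hip)
end

section
/- Let V be a real inner product space, B a finite obtuse set of nonzero vectors of V, and J' ⊆ J ⊆ B. Let λ, λ₁ ∈ V be such that ⟪α, λ⟫ > 0 for every α ∈ J∖J', λ₁ is B-dominant, and λ − λ₁ is a nonnegative real linear combination of the coroots β^∨ for β ∈ J'. Then ⟪α + d, λ₁⟫ > 0 for every α ∈ J∖J' and every vector d that is a nonnegative real linear combination of elements of B. (Combinatorial core of part (i) of the paper's lemma in Section 4.6: under these hypotheses, ⟨γ, v(λ₁)⟩ > 0 for all γ ∈ Φ_J⁺ ∖ Φ_{J'}⁺, since each such γ is of the form α + d as above.) -/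
open scoped RealInnerProductSpace

/-- Combinatorial core of part (i) of the paper's lemma in Section 4.6: if `B` is a finite
obtuse set of nonzero vectors, `J' ⊆ J ⊆ B`, `⟪α, λ⟫ > 0` for all `α ∈ J \ J'`, `λ₁` is
`B`-dominant, and `λ - λ₁` is a nonnegative combination of the coroots `β^∨` for `β ∈ J'`,
then `⟪α + d, λ₁⟫ > 0` for every `α ∈ J \ J'` and every nonnegative combination `d` of
elements of `B`. -/
theorem pairing_pos_of_dominant_approx
    {V : Type*} [NormedAddCommGroup V] [InnerProductSpace ℝ V]
    (B J J' : Finset V) (h0 : ∀ α ∈ B, α ≠ (0 : V))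
    (hobt : ∀ α ∈ B, ∀ β ∈ B, α ≠ β → ⟪α, β⟫ ≤ 0)
    (hJ'J : J' ⊆ J) (hJB : J ⊆ B)
    (lam lam1 : V)
    (hlam : ∀ α ∈ J, α ∉ J' → 0 < ⟪α, lam⟫)
    (hdom : ∀ β ∈ B, 0 ≤ ⟪β, lam1⟫)
    (c : J' → ℝ) (hc : ∀ β : J', 0 ≤ c β)
    (hdiff : lam - lam1 = ∑ β ∈ J'.attach, c β •
      ((2 / ⟪(β : V), (β : V)⟫) • (β : V)))
    (α : V) (hα : α ∈ J) (hα' : α ∉ J')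
    (d : V) (e : B → ℝ) (he : ∀ β : B, 0 ≤ e β)
    (hd : d = ∑ β ∈ B.attach, e β • (β : V)) :
    0 < ⟪α + d, lam1⟫ := by
  have hdle : (0 : ℝ) ≤ ⟪d, lam1⟫ := by
    rw [hd, sum_inner]
    apply Finset.sum_nonneg
    intro β _
    rw [real_inner_smul_left]
    exact mul_nonneg (he β) (hdom β β.2)
  have halpha1 : 0 < ⟪α, lam1⟫ := by
    have hdiff' : ⟪α, lam - lam1⟫ ≤ 0 := by
      rw [hdiff, inner_sum]
      apply Finset.sum_nonpos
      intro β _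
      rw [real_inner_smul_right, real_inner_smul_right]
      have hβB : (β : V) ∈ B := hJB (hJ'J β.2)
      have hne : α ≠ (β : V) := fun h => hα' (h ▸ β.2)
      have h1 : ⟪α, (β : V)⟫ ≤ 0 := hobt α (hJB hα) β hβB hne
      have h2 : (0:ℝ) < ⟪(β : V), (β : V)⟫ :=
        lt_of_le_of_ne real_inner_self_nonneg (Ne.symm (inner_self_ne_zero.mpr (h0 β hβB)))
      exact mul_nonpos_of_nonneg_of_nonpos (hc β)
        (mul_nonpos_of_nonneg_of_nonpos (by positivity) h1)
    have := hlam α hα hα'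
    rw [inner_sub_right] at hdiff'
    linarith
  rw [inner_add_left]
  linarith [real_inner_comm d lam1]
end

section
/- Let (W,S), π : G → W, T, and a c-datum c be as in the context, and let c(w̄;ī) be the associated product. Let w̄ = (g₁,…,g_n) be a list of elements of G with each π(g_i) ∈ S, let ī = (i₁ < ⋯ < i_r) be an index list with 1 ≤ i₁ < ⋯ < i_r ≤ n, and set x := π(g_{i₁}⋯g_{i_r}) and w := π(g₁⋯g_n). Then for every a ∈ ℤ[T] one has c(w̄;ī)·(x·a) = c(w̄;ī)·(w·a). (This is the paper's lemma 'c_{w̄}^{x̄}(x·c) = c_{w̄}^{x̄}(w·c)' in Section 4.4.) -/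
open MonoidAlgebra

/-- The product `c(w̄;ī)` of Section 4.4 of the paper, where a word together with a
selected subword is encoded as a list of pairs `(g, selected?)`: unselected letters `g`
contribute a factor `c g`, and each selected letter `g` twists everything to its right
by the ring automorphism `σ (π g)`. -/
noncomputable def cWord {G W : Type*} [Group G] [Group W] (π : G →* W)
    (σ : W →* RingAut (MonoidAlgebra ℤ π.ker))
    (c : G → MonoidAlgebra ℤ π.ker) : List (G × Bool) → MonoidAlgebra ℤ π.ker
  | [] => 1
  | (g, false) :: l => c g * cWord π σ c l
  | (g, true) :: l => σ (π g) (cWord π σ c l)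

/-! Induction on the word. A selected letter `g` contributes the same factor `π g` to `x` and
to `w`, so it commutes through both sides. An unselected letter contributes `c g` to the
product and `π g` only to `w`; property (c) of the c-datum, `c g * y = c g * (π g · y)`,
absorbs that extra twist. -/

theorem mul_mul_eq_mul_mul_map_of_mul_map {R : Type*} [Semiring R] (f : R →+* R) {u : R}
    (hu : ∀ x, u * x = u * f x) (y z : R) : u * (y * z) = u * y * f z := by
  rw [hu, map_mul, ← mul_assoc, ← hu]

theorem cWord_mul_map_filter_prod_eq {G W : Type*} [Group G] [Group W] (π : G →* W)
    (σ : W →* RingAut (MonoidAlgebra ℤ π.ker)) (c : G → MonoidAlgebra ℤ π.ker)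
    (l : List (G × Bool))
    (hc : ∀ p ∈ l, p.2 = false → ∀ x, c p.1 * x = c p.1 * σ (π p.1) x)
    (a : MonoidAlgebra ℤ π.ker) :
    cWord π σ c l * σ (π (((l.filter fun p => p.2).map Prod.fst).prod)) a =
      cWord π σ c l * σ (π ((l.map Prod.fst).prod)) a := by
  induction l generalizing a with
  | nil => rfl
  | cons p l ih =>
    obtain ⟨g, b⟩ := p
    have ih' := ih fun p hp => hc p (List.mem_cons_of_mem _ hp)
    cases b with
    | true =>
      rw [List.filter_cons_of_pos rfl]
      simp only [cWord, List.map_cons, List.prod_cons, map_mul, RingAut.mul_apply]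
      rw [← map_mul, ih', map_mul]
    | false =>
      rw [List.filter_cons_of_neg (by simp)]
      simp only [cWord, List.map_cons, List.prod_cons, map_mul, RingAut.mul_apply]
      rw [mul_assoc, ih']
      exact mul_mul_eq_mul_mul_map_of_mul_map (σ (π g)).toRingHom
        (hc (g, false) List.mem_cons_self rfl) _ _

theorem cWord_mul_smul_eq_general {B W G : Type*} [Group W] [Group G] {M : CoxeterMatrix B}
    (cs : CoxeterSystem M W) (π : G →* W)
    (σ : W →* RingAut (MonoidAlgebra ℤ π.ker))
    (c : G → MonoidAlgebra ℤ π.ker)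
    (hc_c : ∀ g : G, cs.IsReflection (π g) →
      ∀ x : MonoidAlgebra ℤ π.ker, c g * x = c g * σ (π g) x)
    (l : List (G × Bool)) (hl : ∀ p ∈ l, ∃ i : B, π p.1 = cs.simple i)
    (a : MonoidAlgebra ℤ π.ker) :
    cWord π σ c l * σ (π (((l.filter fun p => p.2).map Prod.fst).prod)) a =
      cWord π σ c l * σ (π ((l.map Prod.fst).prod)) a := by
  refine cWord_mul_map_filter_prod_eq π σ c l (fun p hp _ => hc_c p.1 ?_) a
  obtain ⟨i, hi⟩ := hl p hp
  exact hi ▸ cs.isReflection_simple i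

/-- The paper's Lemma `c_{w̄}^{x̄} (x·a) = c_{w̄}^{x̄} (w·a)` (Section 4.4): for a word `w̄`
in letters lifting simple reflections with selected subword of image `x`, and full image
`w`, one has `c(w̄;ī)·(x·a) = c(w̄;ī)·(w·a)` for all `a ∈ ℤ[T]`. -/
theorem cWord_mul_smul_eq {B W G : Type*} [Group W] [Group G] {M : CoxeterMatrix B}
    (cs : CoxeterSystem M W) (π : G →* W) (hπ : Function.Surjective π)
    (hT : ∀ a b : π.ker, a * b = b * a)
    (σ : W →* RingAut (MonoidAlgebra ℤ π.ker))
    (hσ : ∀ (g : G) (t : π.ker),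
      σ (π g) (MonoidAlgebra.of ℤ π.ker t) =
        MonoidAlgebra.of ℤ π.ker ⟨g * t * g⁻¹, (MonoidHom.normal_ker π).conj_mem t t.2 g⟩)
    (c : G → MonoidAlgebra ℤ π.ker)
    (hc_a : ∀ g : G, cs.IsReflection (π g) → ∀ t : π.ker,
      c (↑t * g) = MonoidAlgebra.of ℤ π.ker t * c g)
    (hc_b : ∀ g h : G, cs.IsReflection (π g) → c (h * g * h⁻¹) = σ (π h) (c g))
    (hc_c : ∀ g : G, cs.IsReflection (π g) →
      ∀ x : MonoidAlgebra ℤ π.ker, c g * x = c g * σ (π g) x)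
    (l : List (G × Bool)) (hl : ∀ p ∈ l, ∃ i : B, π p.1 = cs.simple i)
    (a : MonoidAlgebra ℤ π.ker) :
    cWord π σ c l * σ (π (((l.filter fun p => p.2).map Prod.fst).prod)) a =
      cWord π σ c l * σ (π ((l.map Prod.fst).prod)) a :=
  cWord_mul_smul_eq_general cs π σ c hc_c l hl a
end

section
/- Let C be a field, Λ a free abelian group of finite rank, and λ₀ an element of some ℤ-basis of Λ. Then the element 1 − e^{λ₀} is irreducible in the group algebra C[Λ]. (This is the irreducibility lemma of Appendix A.3 of the paper, applied there with Λ = Z/Z⁰ and e^{λ₀} = τ_{a_α}, showing that 1 − τ_α ∈ H_Z(ψ_V) is irreducible.) -/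
/-!
Let `q` be the endomorphism of `Λ` that kills the `λ₀`-coordinate. Since `a - q a` is a multiple
of `λ₀`, every `e^a - e^{q a}` is divisible by `1 - e^{λ₀}`, so the kernel of the induced ring
endomorphism `q_*` of `C[Λ]` is the principal ideal `(1 - e^{λ₀})`. Since `Λ ≅ ℤ^(ι)` has unique
sums, the codomain `C[Λ]` is a domain, so this kernel is prime.
-/

open AddMonoidAlgebra

theorem one_sub_dvd_one_sub_zpow {R : Type*} [CommRing R] (u : Rˣ) (n : ℤ) :
    1 - (u : R) ∣ 1 - ((u ^ n : Rˣ) : R) := by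
  cases n with
  | ofNat k => simpa using one_sub_dvd_one_sub_pow (u : R) k
  | negSucc k =>
    have hinv : ((u ^ Int.negSucc k : Rˣ) : R) * (u : R) ^ (k + 1) = 1 := by
      rw [← Units.val_pow_eq_pow_val, ← Units.val_mul, zpow_negSucc, inv_mul_cancel,
        Units.val_one]
    have hfactor : 1 - ((u ^ Int.negSucc k : Rˣ) : R) =
        -((u ^ Int.negSucc k : Rˣ) : R) * (1 - (u : R) ^ (k + 1)) := by
      linear_combination -hinv
    rw [hfactor]
    exact dvd_mul_of_dvd_right (one_sub_dvd_one_sub_pow _ _) _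

namespace AddMonoidAlgebra

variable {k G : Type*} [CommRing k] [AddCommGroup G]

theorem of'_zsmul (l : G) (n : ℤ) :
    of' k G (n • l) = (((of k G).toHomUnits (Multiplicative.ofAdd l) ^ n : k[G]ˣ) : k[G]) := by
  rw [← map_zpow, ← ofAdd_zsmul, MonoidHom.coe_toHomUnits, of_apply, of'_apply, toAdd_ofAdd]

theorem one_sub_of'_dvd_of'_sub_of' {l a a' : G} (h : a - a' ∈ AddSubgroup.zmultiples l) :
    1 - of' k G l ∣ of' k G a - of' k G a' := by
  obtain ⟨n, hn⟩ := AddSubgroup.mem_zmultiples_iff.mp h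
  have hfactor : of' k G a - of' k G a' = -of' k G a' * (1 - of' k G (n • l)) := by
    have hshift : of' k G a' * of' k G (a - a') = of' k G a := by
      rw [of'_apply, of'_apply, of'_apply, single_mul_single, add_sub_cancel, mul_one]
    rw [hn]
    linear_combination -hshift
  rw [hfactor, of'_zsmul]
  exact dvd_mul_of_dvd_right
    (one_sub_dvd_one_sub_zpow ((of k G).toHomUnits (Multiplicative.ofAdd l)) n) _

theorem one_sub_of'_dvd_sub_mapDomain {l : G} {q : G →+ G}
    (hq : ∀ a, a - q a ∈ AddSubgroup.zmultiples l) (f : k[G]) :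
    1 - of' k G l ∣ f - mapDomainRingHom k q f := by
  induction f using AddMonoidAlgebra.induction_linear with
  | zero => simp
  | add f g hf hg =>
    rw [map_add, add_sub_add_comm]
    exact dvd_add hf hg
  | single a r =>
    have hsingle : single a r - mapDomainRingHom k q (single a r) =
        single 0 r * (of' k G a - of' k G (q a)) := by
      simp only [mapDomainRingHom_apply, mapDomain_single, mul_sub, of'_apply, single_mul_single,
        zero_add, mul_one]
    rw [hsingle]
    exact dvd_mul_of_dvd_right (one_sub_of'_dvd_of'_sub_of' (hq a)) _

theorem ker_mapDomainRingHom_eq_span_one_sub_of' {l : G} {q : G →+ G}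
    (hq : ∀ a, a - q a ∈ AddSubgroup.zmultiples l) (hql : q l = 0) :
    RingHom.ker (mapDomainRingHom k q) = Ideal.span {1 - of' k G l} := by
  apply le_antisymm
  · intro f hf
    have hdvd := one_sub_of'_dvd_sub_mapDomain (k := k) hq f
    rwa [RingHom.mem_ker.mp hf, sub_zero, ← Ideal.mem_span_singleton] at hdvd
  · rw [Ideal.span_le, Set.singleton_subset_iff, SetLike.mem_coe, RingHom.mem_ker, map_sub,
      map_one, of'_apply, mapDomainRingHom_apply, mapDomain_single, hql, ← one_def, sub_self]

theorem one_sub_of'_ne_zero [Nontrivial k] {l : G} (hl : l ≠ 0) : 1 - of' k G l ≠ 0 := by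
  rw [sub_ne_zero, one_def, of'_apply, Ne, single_left_inj one_ne_zero]
  exact hl.symm

theorem prime_one_sub_of' [IsDomain k] [UniqueSums G] {l : G} (hl : l ≠ 0) (q : G →+ G)
    (hq : ∀ a, a - q a ∈ AddSubgroup.zmultiples l) (hql : q l = 0) :
    Prime (1 - of' k G l) := by
  rw [← Ideal.span_singleton_prime (one_sub_of'_ne_zero hl),
    ← ker_mapDomainRingHom_eq_span_one_sub_of' hq hql]
  exact RingHom.ker_isPrime _

end AddMonoidAlgebra

theorem one_sub_basis_elem_irreducible_general
    {C : Type*} [Field C] {Λ : Type*} [AddCommGroup Λ]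
    {ι : Type*} (b : Module.Basis ι ℤ Λ) (i₀ : ι) :
    Irreducible ((1 : AddMonoidAlgebra C Λ) - AddMonoidAlgebra.of' C Λ (b i₀)) := by
  have : UniqueSums Λ := (AddEquiv.uniqueSums_iff b.repr.toAddEquiv).mpr inferInstance
  let q : Λ →+ Λ := (LinearMap.id - (b.coord i₀).smulRight (b i₀)).toAddMonoidHom
  have hq : ∀ a, a - q a ∈ AddSubgroup.zmultiples (b i₀) := fun a =>
    AddSubgroup.mem_zmultiples_iff.mpr ⟨b.coord i₀ a, by simp [q]⟩
  have hql : q (b i₀) = 0 := by simp [q]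
  exact (AddMonoidAlgebra.prime_one_sub_of' (b.ne_zero i₀) q hq hql).irreducible

/-- The irreducibility lemma of Appendix A.3 of the paper: if `Λ` is a free abelian group of
finite rank and `λ₀` is an element of some `ℤ`-basis of `Λ`, then `1 - e^{λ₀}` is irreducible
in the group algebra `C[Λ]` over a field `C`. -/
theorem one_sub_basis_elem_irreducible
    {C : Type*} [Field C] {Λ : Type*} [AddCommGroup Λ]
    {ι : Type*} [Fintype ι] (b : Module.Basis ι ℤ Λ) (i₀ : ι) :
    Irreducible ((1 : AddMonoidAlgebra C Λ) - AddMonoidAlgebra.of' C Λ (b i₀)) :=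
  one_sub_basis_elem_irreducible_general b i₀
end
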